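/- There are exactly (2n-1 choose n) faces of the polytope P_{Γ_{2n}} that are copies of the Birkhoff polytope B_n. Equivalently, the number of subgraphs of the complete general graph Γ_{2n} isomorphic to the complete bipartite graph K_{n,n} is (2n-1 choose n), and each such subgraph defines a face of P_{Γ_{2n}} affinely isomorphic to B_n. -/

import Mathlib

open Finset

/-- A magic labeling of the finite graph with vertex set `V` and edge set `E`
(loops allowed), of magic sum `r`. -/
def IsMagic {V : Type*} [Fintype V] [DecidableEq V]
    (E : Finset (Sym2 V)) (L : Sym2 V → ℕ) (r : ℕ) : Prop :=
  (∀ e, e ∉ E → L e = 0) ∧ ∀ v : V, ∑ e ∈ E with v ∈ e, L e = r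

/-- The polytope `P_G` of magic labelings of the graph with edge set `E`. -/
def PG {V : Type*} [Fintype V] [DecidableEq V] (E : Finset (Sym2 V)) : Set (Sym2 V → ℝ) :=
  {x | (∀ e, e ∉ E → x e = 0) ∧ (∀ e, 0 ≤ x e) ∧ ∀ v : V, ∑ e ∈ E with v ∈ e, x e = 1}

/-- A face of a polytope `P`: either `P` itself, or the (nonempty) intersection of `P`
with a supporting hyperplane. -/
def IsFaceOf {W : Type*} [AddCommGroup W] [Module ℝ W] (F P : Set W) : Prop :=
  F = P ∨ ∃ (c : W →ₗ[ℝ] ℝ) (δ : ℝ), c ≠ 0 ∧ (∀ x ∈ P, c x ≤ δ) ∧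
    (∃ x ∈ P, c x = δ) ∧ F = {x ∈ P | c x = δ}

/-- The Birkhoff polytope `B_n` of `n × n` doubly stochastic matrices. -/
def Birkhoff (n : ℕ) : Set (Matrix (Fin n) (Fin n) ℝ) :=
  {M | (∀ i j, 0 ≤ M i j) ∧ (∀ i, ∑ j, M i j = 1) ∧ (∀ j, ∑ i, M i j = 1)}

/-- `E'` is the edge set of a subgraph of the complete general graph `Γ_{2n}` isomorphic
to the complete bipartite graph `K_{n,n}`: there is a set `A` of `n` vertices such that
the edges of `E'` are exactly the pairs joining `A` to its complement. -/
def IsKnnSubgraph (n : ℕ) (E' : Finset (Sym2 (Fin (2 * n)))) : Prop :=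
  ∃ A : Finset (Fin (2 * n)), A.card = n ∧
    ∀ e : Sym2 (Fin (2 * n)), e ∈ E' ↔ ∃ u v, u ∈ A ∧ v ∉ A ∧ e = s(u, v)


/-!
A copy of `K_{n,n}` in `Γ_{2n}` is the set of edges of the cut between a set `A` of `n`
vertices and its complement. The cut determines `{A, Aᶜ}`, so choosing the side that avoids a
fixed vertex `z` identifies these subgraphs with the `n`-subsets of the other `2n - 1` vertices.

A labeling supported on the cut is an `A × Aᶜ` matrix, and the vertex conditions at `A` and at
`Aᶜ` are its row and column sums: this identifies `P` of the cut with `B_n`. Finally, for any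
`E ⊆ F`, `P_E` is the face of `P_F` on which the nonnegative labels of the edges of `F \ E` add
up to zero.
-/

open Function

section Cut

variable {V : Type*} [Fintype V] [DecidableEq V]

def cutEdges (A : Finset V) : Finset (Sym2 V) :=
  univ.filter fun e => ∃ u v, u ∈ A ∧ v ∉ A ∧ e = s(u, v)

variable {A : Finset V}

theorem mem_cutEdges {e : Sym2 V} :
    e ∈ cutEdges A ↔ ∃ u v, u ∈ A ∧ v ∉ A ∧ e = s(u, v) := by
  simp [cutEdges]

theorem mk_mem_cutEdges {u v : V} : s(u, v) ∈ cutEdges A ↔ (u ∈ A ↔ v ∉ A) := by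
  rw [mem_cutEdges]
  constructor
  · rintro ⟨u', v', hu', hv', h⟩
    rcases Sym2.eq_iff.1 h with ⟨rfl, rfl⟩ | ⟨rfl, rfl⟩ <;> tauto
  · intro h
    by_cases hu : u ∈ A
    · exact ⟨u, v, hu, h.1 hu, rfl⟩
    · exact ⟨v, u, not_not.1 (mt h.2 hu), hu, Sym2.eq_swap⟩

theorem cutEdges_compl : cutEdges Aᶜ = cutEdges A := by
  ext e
  induction e using Sym2.ind with
  | _ u v => simp only [mk_mem_cutEdges, mem_compl]; tauto

theorem filter_mem_cutEdges {u : V} (hu : u ∈ A) :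
    (cutEdges A).filter (u ∈ ·) = Aᶜ.image (s(u, ·)) := by
  ext e
  induction e using Sym2.ind with
  | _ v w =>
    simp only [mem_filter, mk_mem_cutEdges, Sym2.mem_iff, mem_image, mem_compl, Sym2.eq_iff]
    constructor
    · rintro ⟨h, rfl | rfl⟩
      · exact ⟨w, h.1 hu, Or.inl ⟨rfl, rfl⟩⟩
      · exact ⟨v, fun hv => h.1 hv hu, Or.inr ⟨rfl, rfl⟩⟩
    · rintro ⟨x, hx, ⟨rfl, rfl⟩ | ⟨rfl, rfl⟩⟩
      · exact ⟨by tauto, Or.inl rfl⟩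
      · exact ⟨by tauto, Or.inr rfl⟩

theorem sum_incident_cutEdges {M : Type*} [AddCommMonoid M] {u : V} (hu : u ∈ A)
    (x : Sym2 V → M) : ∑ e ∈ cutEdges A with u ∈ e, x e = ∑ v ∈ Aᶜ, x s(u, v) := by
  rw [filter_mem_cutEdges hu, sum_image]
  intro v hv w _ h
  rcases Sym2.eq_iff.1 h with ⟨-, rfl⟩ | ⟨-, rfl⟩
  · rfl
  · exact absurd hu (mem_compl.1 (mem_coe.1 hv))

theorem filter_mk_mem_cutEdges {z : V} (hz : z ∉ A) :
    univ.filter (fun v => s(z, v) ∈ cutEdges A) = A := by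
  ext v
  simp only [mem_filter, mem_univ, true_and, mk_mem_cutEdges]
  tauto

theorem injOn_cutEdges (z : V) : Set.InjOn cutEdges {A : Finset V | z ∉ A} := by
  intro A hA B hB h
  rw [← filter_mk_mem_cutEdges hA, ← filter_mk_mem_cutEdges hB, h]

theorem exists_card_eq_cutEdges_iff {k : ℕ} (hV : Fintype.card V = 2 * k) (z : V)
    {E : Finset (Sym2 V)} :
    (∃ A : Finset V, A.card = k ∧ E = cutEdges A) ↔
      E ∈ ((univ.erase z).powersetCard k).image cutEdges := by
  simp only [mem_image, mem_powersetCard, subset_erase, subset_univ, true_and]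
  constructor
  · rintro ⟨A, hA, rfl⟩
    by_cases hz : z ∈ A
    · refine ⟨Aᶜ, ⟨by simpa using hz, ?_⟩, cutEdges_compl⟩
      rw [card_compl, hA, hV]
      omega
    · exact ⟨A, ⟨hz, hA⟩, rfl⟩
  · rintro ⟨A, ⟨-, hA⟩, rfl⟩
    exact ⟨A, hA, rfl⟩

theorem card_exists_card_eq_cutEdges {k : ℕ} (hV : Fintype.card V = 2 * k) :
    Nat.card {E : Finset (Sym2 V) // ∃ A : Finset V, A.card = k ∧ E = cutEdges A} =
      (2 * k - 1).choose k := by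
  rcases k.eq_zero_or_pos with rfl | hk
  · simp
  · obtain ⟨z⟩ : Nonempty V := Fintype.card_pos_iff.1 (by omega)
    rw [Nat.card_congr (Equiv.subtypeEquivRight fun E => exists_card_eq_cutEdges_iff hV z),
      Nat.card_eq_finsetCard, card_image_of_injOn, card_powersetCard,
      card_erase_of_mem (mem_univ z), card_univ, hV]
    refine (injOn_cutEdges z).mono fun A hA => ?_
    exact (subset_erase.1 (mem_powersetCard.1 hA).1).2

end Cut

theorem isKnnSubgraph_iff {n : ℕ} {E : Finset (Sym2 (Fin (2 * n)))} :
    IsKnnSubgraph n E ↔ ∃ A : Finset (Fin (2 * n)), A.card = n ∧ E = cutEdges A := by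
  simp only [IsKnnSubgraph, Finset.ext_iff, mem_cutEdges]

theorem card_isKnnSubgraph (n : ℕ) :
    Nat.card {E : Finset (Sym2 (Fin (2 * n))) // IsKnnSubgraph n E} = (2 * n - 1).choose n := by
  rw [Nat.card_congr (Equiv.subtypeEquivRight fun E => isKnnSubgraph_iff)]
  exact card_exists_card_eq_cutEdges (Fintype.card_fin _)

section Face

variable {V : Type*} [DecidableEq V] {E F : Finset (Sym2 V)}

theorem sum_incident_eq_of_subset (hEF : E ⊆ F) {x : Sym2 V → ℝ} (hx : ∀ e ∉ E, x e = 0)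
    (v : V) : ∑ e ∈ F with v ∈ e, x e = ∑ e ∈ E with v ∈ e, x e := by
  refine (sum_subset (filter_subset_filter _ hEF) fun e he heE => hx e fun h => ?_).symm
  exact heE (mem_filter.2 ⟨h, (mem_filter.1 he).2⟩)

variable [Fintype V]

theorem PG_mono (hEF : E ⊆ F) : PG E ⊆ PG F := fun _ ⟨hx0, hxn, hxs⟩ =>
  ⟨fun e he => hx0 e fun h => he (hEF h), hxn,
    fun v => (sum_incident_eq_of_subset hEF hx0 v).trans (hxs v)⟩

theorem PG_eq_sep_sum_sdiff_eq_zero (hEF : E ⊆ F) :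
    PG E = {x ∈ PG F | ∑ e ∈ F \ E, x e = 0} := by
  ext x
  constructor
  · intro hx
    exact ⟨PG_mono hEF hx, sum_eq_zero fun e he => hx.1 e (mem_sdiff.1 he).2⟩
  · rintro ⟨⟨hx0, hxn, hxs⟩, hsum⟩
    have hxE : ∀ e ∉ E, x e = 0 := fun e he => by
      by_cases heF : e ∈ F
      · exact (sum_eq_zero_iff_of_nonneg fun e _ => hxn e).1 hsum e (mem_sdiff.2 ⟨heF, he⟩)
      · exact hx0 e heF
    exact ⟨hxE, hxn, fun v => (sum_incident_eq_of_subset hEF hxE v).symm.trans (hxs v)⟩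

theorem isFaceOf_PG_of_subset (hEF : E ⊆ F) (hne : (PG E).Nonempty) :
    IsFaceOf (PG E) (PG F) := by
  rcases hEF.eq_or_ssubset with rfl | hlt
  · exact Or.inl rfl
  right
  obtain ⟨e₀, he₀F, he₀E⟩ := exists_of_ssubset hlt
  set c : (Sym2 V → ℝ) →ₗ[ℝ] ℝ := -∑ e ∈ F \ E, LinearMap.proj e
  have hc : ∀ x, c x = -∑ e ∈ F \ E, x e := fun x => by simp [c]
  have hface : PG E = {x ∈ PG F | c x = 0} := by
    simp only [hc, neg_eq_zero]
    exact PG_eq_sep_sum_sdiff_eq_zero hEF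
  refine ⟨c, 0, fun h => ?_, fun x hx => ?_, ?_, hface⟩
  · have h₀ := LinearMap.congr_fun h (Pi.single e₀ 1)
    simp [hc, sum_pi_single', he₀F, he₀E] at h₀
  · rw [hc, neg_nonpos]
    exact sum_nonneg fun e _ => hx.2.1 e
  · obtain ⟨x, hx⟩ := hne
    rw [hface] at hx
    exact ⟨x, hx⟩

end Face

section Birkhoff

variable {V : Type*} [Fintype V] [DecidableEq V] {n : ℕ} {A : Finset V}
  (a : Fin n ≃ A) (b : Fin n ≃ ↥Aᶜ)

def cutEdge (p : Fin n × Fin n) : Sym2 V := s(a p.1, b p.2)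

theorem cutEdge_injective : Injective (cutEdge a b) := by
  rintro ⟨i, j⟩ ⟨i', j'⟩ h
  rcases Sym2.eq_iff.1 h with ⟨hi, hj⟩ | ⟨hi, -⟩
  · exact Prod.ext (a.injective (Subtype.ext hi)) (b.injective (Subtype.ext hj))
  · exact absurd (hi ▸ (a i).2) (mem_compl.1 (b j').2)

theorem mem_cutEdges_iff_exists_cutEdge {e : Sym2 V} :
    e ∈ cutEdges A ↔ ∃ p, cutEdge a b p = e := by
  constructor
  · rw [mem_cutEdges]
    rintro ⟨u, v, hu, hv, rfl⟩
    exact ⟨(a.symm ⟨u, hu⟩, b.symm ⟨v, mem_compl.2 hv⟩), by simp [cutEdge]⟩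
  · rintro ⟨⟨i, j⟩, rfl⟩
    exact mk_mem_cutEdges.2 (iff_of_true (a i).2 (mem_compl.1 (b j).2))

theorem exists_apply_eq_or_exists_apply_eq (v : V) :
    (∃ i, (a i : V) = v) ∨ ∃ j, (b j : V) = v := by
  by_cases hv : v ∈ A
  · exact Or.inl ⟨a.symm ⟨v, hv⟩, by simp⟩
  · exact Or.inr ⟨b.symm ⟨v, mem_compl.2 hv⟩, by simp⟩

def cutMatrix : (Sym2 V → ℝ) →ₗ[ℝ] Matrix (Fin n) (Fin n) ℝ where
  toFun x := Matrix.of fun i j => x (cutEdge a b (i, j))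
  map_add' _ _ := rfl
  map_smul' _ _ := rfl

theorem sum_incident_eq_row_sum (x : Sym2 V → ℝ) (i : Fin n) :
    ∑ e ∈ cutEdges A with (a i : V) ∈ e, x e = ∑ j, cutMatrix a b x i j := by
  rw [sum_incident_cutEdges (a i).2, ← sum_coe_sort, ← b.sum_comp]
  rfl

theorem sum_incident_eq_col_sum (x : Sym2 V → ℝ) (j : Fin n) :
    ∑ e ∈ cutEdges A with (b j : V) ∈ e, x e = ∑ i, cutMatrix a b x i j := by
  rw [← cutEdges_compl, sum_incident_cutEdges (b j).2, compl_compl, ← sum_coe_sort,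
    ← a.sum_comp]
  simp [cutMatrix, cutEdge, Sym2.eq_swap]

theorem cutMatrix_extend (M : Matrix (Fin n) (Fin n) ℝ) :
    cutMatrix a b (extend (cutEdge a b) (fun p => M p.1 p.2) 0) = M := by
  ext i j
  exact (cutEdge_injective a b).extend_apply (fun p => M p.1 p.2) 0 (i, j)

theorem mapsTo_cutMatrix : Set.MapsTo (cutMatrix a b) (PG (cutEdges A)) (Birkhoff n) :=
  fun x ⟨_, hxn, hxs⟩ => ⟨fun _ _ => hxn _,
    fun i => sum_incident_eq_row_sum a b x i ▸ hxs (a i),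
    fun j => sum_incident_eq_col_sum a b x j ▸ hxs (b j)⟩

theorem injOn_cutMatrix : Set.InjOn (cutMatrix a b) (PG (cutEdges A)) := by
  intro x hx y hy h
  funext e
  by_cases he : e ∈ cutEdges A
  · obtain ⟨⟨i, j⟩, rfl⟩ := (mem_cutEdges_iff_exists_cutEdge a b).1 he
    exact congrFun (congrFun h i) j
  · rw [hx.1 e he, hy.1 e he]

theorem surjOn_cutMatrix : Set.SurjOn (cutMatrix a b) (PG (cutEdges A)) (Birkhoff n) := by
  rintro M ⟨hMn, hMr, hMc⟩
  refine ⟨extend (cutEdge a b) (fun p => M p.1 p.2) 0,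
    ⟨fun e he => ?_, fun e => ?_, fun v => ?_⟩, cutMatrix_extend a b M⟩
  · exact extend_apply' _ _ _ (by rwa [← mem_cutEdges_iff_exists_cutEdge a b])
  · by_cases he : ∃ p, cutEdge a b p = e
    · obtain ⟨p, rfl⟩ := he
      rw [(cutEdge_injective a b).extend_apply]
      exact hMn _ _
    · rw [extend_apply' _ _ _ he]
      rfl
  · rcases exists_apply_eq_or_exists_apply_eq a b v with ⟨i, rfl⟩ | ⟨j, rfl⟩
    · rw [sum_incident_eq_row_sum, cutMatrix_extend]
      exact hMr i
    · rw [sum_incident_eq_col_sum, cutMatrix_extend]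
      exact hMc j

theorem bijOn_cutMatrix : Set.BijOn (cutMatrix a b) (PG (cutEdges A)) (Birkhoff n) :=
  ⟨mapsTo_cutMatrix a b, injOn_cutMatrix a b, surjOn_cutMatrix a b⟩

end Birkhoff

theorem one_mem_Birkhoff (n : ℕ) : (1 : Matrix (Fin n) (Fin n) ℝ) ∈ Birkhoff n :=
  mem_doublyStochastic_iff_sum.1 (one_mem _)

/-- There are exactly `(2n-1 choose n)` faces of `P_{Γ_{2n}}` that are copies of the
Birkhoff polytope `B_n`: the number of subgraphs of the complete general graph `Γ_{2n}`
isomorphic to `K_{n,n}` is `(2n-1 choose n)`, and each such subgraph defines a face of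
`P_{Γ_{2n}}` that is affinely isomorphic to `B_n`. -/
theorem birkhoff_faces_of_PGamma (n : ℕ) :
    Nat.card {E' : Finset (Sym2 (Fin (2 * n))) // IsKnnSubgraph n E'} =
      Nat.choose (2 * n - 1) n ∧
    ∀ E' : Finset (Sym2 (Fin (2 * n))), IsKnnSubgraph n E' →
      IsFaceOf (PG E') (PG (Finset.univ : Finset (Sym2 (Fin (2 * n))))) ∧
      ∃ f : (Sym2 (Fin (2 * n)) → ℝ) →ᵃ[ℝ] Matrix (Fin n) (Fin n) ℝ,
        Set.BijOn f (PG E') (Birkhoff n) := by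
  refine ⟨card_isKnnSubgraph n, fun E' hE' => ?_⟩
  obtain ⟨A, hA, rfl⟩ := isKnnSubgraph_iff.1 hE'
  have hAc : Aᶜ.card = n := by
    rw [card_compl, hA, Fintype.card_fin]
    omega
  have hbij := bijOn_cutMatrix (A.equivFinOfCardEq hA).symm (Aᶜ.equivFinOfCardEq hAc).symm
  obtain ⟨x, hx, -⟩ := hbij.surjOn (one_mem_Birkhoff n)
  exact ⟨isFaceOf_PG_of_subset (subset_univ _) ⟨x, hx⟩, (cutMatrix _ _).toAffineMap, hbij⟩
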